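/- arXiv:2108.02491 — 5 statements merged into one kernel-verified Lean document; each statement's English description precedes it below -/
import Mathlib

section
/- For any indices j, m with E_m ≤ E_j ≤ E_m + ΔE, the Lebesgue measure of the set {e ∈ [0, ΔE) : ⌊(E_j − e)/ΔE⌋ and ⌊(E_m − e)/ΔE⌋ have different parity} equals E_j − E_m. -/
/-- For indices `j, m` with `E_m ≤ E_j ≤ E_m + ΔE`, the Lebesgue measure of the set of
`e ∈ [0, ΔE)` where `⌊(E_j − e)/ΔE⌋` and `⌊(E_m − e)/ΔE⌋` have different parity equals
`E_j − E_m`. -/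
theorem measure_parity_set {N : ℕ} (E : Fin N → ℝ) (hE : Monotone E)
    (ΔE : ℝ) (hΔE : 0 < ΔE) (j m : Fin N)
    (h1 : E m ≤ E j) (h2 : E j ≤ E m + ΔE) :
    MeasureTheory.volume
        {x : ℝ | x ∈ Set.Ico (0 : ℝ) ΔE ∧
          ¬ (Odd ⌊(E j - x) / ΔE⌋ ↔ Odd ⌊(E m - x) / ΔE⌋)} =
      ENNReal.ofReal (E j - E m) := by
  set n : ℤ := ⌊E m / ΔE⌋ with hn
  set r : ℝ := E m - n * ΔE with hr
  set s : ℝ := E j - n * ΔE with hs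
  have hnle : (n : ℝ) * ΔE ≤ E m := by
    have := Int.floor_le (E m / ΔE)
    calc (n : ℝ) * ΔE ≤ (E m / ΔE) * ΔE := by nlinarith
    _ = E m := by field_simp
  have hnlt : E m < ((n : ℝ) + 1) * ΔE := by
    have := Int.lt_floor_add_one (E m / ΔE)
    calc E m = (E m / ΔE) * ΔE := by field_simp
    _ < ((n : ℝ) + 1) * ΔE := by nlinarith
  have hr0 : 0 ≤ r := by simp only [hr]; linarith
  have hrlt : r < ΔE := by simp only [hr]; nlinarith
  have hrs : r ≤ s := by simp only [hr, hs]; linarith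
  have hsr : s - ΔE ≤ r := by simp only [hr, hs]; linarith
  have hset : {x : ℝ | x ∈ Set.Ico (0 : ℝ) ΔE ∧
          ¬ (Odd ⌊(E j - x) / ΔE⌋ ↔ Odd ⌊(E m - x) / ΔE⌋)}
      = (Set.Ioc r s ∩ Set.Iio ΔE) ∪ Set.Icc 0 (s - ΔE) := by
    ext x
    simp only [Set.mem_setOf_eq, Set.mem_Ico, Set.mem_union, Set.mem_inter_iff,
      Set.mem_Ioc, Set.mem_Iio, Set.mem_Icc]
    set A : ℤ := ⌊(E j - x) / ΔE⌋ with hA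
    set B : ℤ := ⌊(E m - x) / ΔE⌋ with hB
    have hAfl : (A : ℝ) * ΔE ≤ E j - x := by
      have := Int.floor_le ((E j - x) / ΔE)
      rw [← hA, le_div_iff₀ hΔE] at this; exact this
    have hAfl2 : E j - x < ((A : ℝ) + 1) * ΔE := by
      have := Int.lt_floor_add_one ((E j - x) / ΔE)
      rw [← hA, div_lt_iff₀ hΔE] at this; exact this
    have hBfl : (B : ℝ) * ΔE ≤ E m - x := by
      have := Int.floor_le ((E m - x) / ΔE)
      rw [← hB, le_div_iff₀ hΔE] at this; exact this
    have hBfl2 : E m - x < ((B : ℝ) + 1) * ΔE := by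
      have := Int.lt_floor_add_one ((E m - x) / ΔE)
      rw [← hB, div_lt_iff₀ hΔE] at this; exact this
    have hBA : B ≤ A := by
      apply Int.floor_mono
      gcongr
    have hAB1 : A ≤ B + 1 := by
      have : (A : ℝ) < (B : ℝ) + 2 := by nlinarith
      have : A < B + 2 := by exact_mod_cast this
      omega
    have hpar : (¬ (Odd A ↔ Odd B)) ↔ B < A := by
      rw [Int.odd_iff, Int.odd_iff]
      omega
    constructor
    · rintro ⟨⟨hx0, hxΔ⟩, hparity⟩
      rw [hpar] at hparity
      have hBA1 : (B : ℝ) + 1 ≤ (A : ℝ) := by exact_mod_cast hparity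
      have hlow : E m - x < (A : ℝ) * ΔE := by nlinarith
      have hAge : n ≤ A := by
        have : (n : ℝ) < (A : ℝ) + 1 := by nlinarith
        have : n < A + 1 := by exact_mod_cast this
        omega
      have hAle : A ≤ n + 1 := by
        have : (A : ℝ) < (n : ℝ) + 2 := by nlinarith
        have : A < n + 2 := by exact_mod_cast this
        omega
      rcases (by omega : A = n ∨ A = n + 1) with hc | hc
      · left
        rw [hc] at hlow hAfl
        exact ⟨⟨by simp only [hr]; linarith, by simp only [hs]; linarith⟩, hxΔ⟩
      · right
        rw [hc] at hAfl
        push_cast at hAfl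
        refine ⟨hx0, by simp only [hs]; linarith⟩
    · rintro (⟨⟨hrx, hxs⟩, hxΔ⟩ | ⟨hx0, hxs⟩)
      · have hx0 : 0 ≤ x := le_of_lt (lt_of_le_of_lt hr0 hrx)
        refine ⟨⟨hx0, hxΔ⟩, hpar.mpr ?_⟩
        rw [hr] at hrx; rw [hs] at hxs
        have hBn : (B : ℝ) < (n : ℝ) := by nlinarith
        have hnA : (n : ℝ) < (A : ℝ) + 1 := by nlinarith
        have hBn' : B < n := by exact_mod_cast hBn
        have hnA' : n < A + 1 := by exact_mod_cast hnA
        omega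
      · have hxΔ : x < ΔE := lt_of_le_of_lt (le_trans hxs hsr) hrlt
        refine ⟨⟨hx0, hxΔ⟩, hpar.mpr ?_⟩
        rw [hs] at hxs
        have hBn : (B : ℝ) < (n : ℝ) + 1 := by nlinarith
        have hnA : (n : ℝ) + 1 < (A : ℝ) + 1 := by nlinarith
        have hBn' : B < n + 1 := by exact_mod_cast hBn
        have hnA' : n + 1 < A + 1 := by exact_mod_cast hnA
        omega
  rw [hset]
  have hdisj : Disjoint (Set.Ioc r s ∩ Set.Iio ΔE) (Set.Icc 0 (s - ΔE)) := by
    rw [Set.disjoint_left]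
    rintro x ⟨⟨hx1, _⟩, _⟩ ⟨_, hx2⟩
    linarith
  rw [MeasureTheory.measure_union hdisj measurableSet_Icc]
  have hfirst : MeasureTheory.volume (Set.Ioc r s ∩ Set.Iio ΔE)
      = ENNReal.ofReal (min s ΔE - r) := by
    apply le_antisymm
    · calc MeasureTheory.volume (Set.Ioc r s ∩ Set.Iio ΔE)
          ≤ MeasureTheory.volume (Set.Ioc r (min s ΔE)) := by
            apply MeasureTheory.measure_mono
            rintro x ⟨⟨a, b⟩, c⟩
            exact ⟨a, le_min b (le_of_lt c)⟩
      _ = ENNReal.ofReal (min s ΔE - r) := Real.volume_Ioc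
    · calc ENNReal.ofReal (min s ΔE - r)
          = MeasureTheory.volume (Set.Ioo r (min s ΔE)) := Real.volume_Ioo.symm
      _ ≤ MeasureTheory.volume (Set.Ioc r s ∩ Set.Iio ΔE) := by
            apply MeasureTheory.measure_mono
            rintro x ⟨a, b⟩
            exact ⟨⟨a, le_of_lt (lt_of_lt_of_le b (min_le_left _ _))⟩,
              lt_of_lt_of_le b (min_le_right _ _)⟩
  rw [hfirst, Real.volume_Icc]
  have hDeq : s - r = E j - E m := by simp only [hr, hs]; ring
  rcases le_total s ΔE with hc | hc
  · rw [min_eq_left hc]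
    have h0 : s - ΔE - 0 ≤ 0 := by linarith
    rw [ENNReal.ofReal_of_nonpos h0, add_zero, hDeq]
  · rw [min_eq_right hc, ← ENNReal.ofReal_add (by linarith) (by linarith)]
    have key : ΔE - r + (s - ΔE - 0) = E j - E m := by rw [← hDeq]; ring
    rw [key]
end

section
/- For every e ∈ [0, ΔE) and every pair of indices m < j with E_j − E_m ≤ ΔE, there is at most one index k with m ≤ k < j such that h_{k+1}(e) ≠ h_k(e), where h_j(e) = 1/2 if ⌊(E_j − e)/ΔE⌋ is odd and h_j(e) = −1/2 if it is even. -/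
open scoped Classical

/-- The function `h_j(e)`: equals `1/2` if `⌊(E_j − e)/ΔE⌋` is odd and `−1/2` if it is even. -/
noncomputable def hj {N : ℕ} (E : Fin N → ℝ) (ΔE : ℝ) (j : Fin N) (x : ℝ) : ℝ :=
  if Odd ⌊(E j - x) / ΔE⌋ then 1 / 2 else -(1 / 2)

/-- For every `e ∈ [0, ΔE)` and every pair of indices `m < j` with `E_j − E_m ≤ ΔE`,
there is at most one index `k` with `m ≤ k < j` such that `h_{k+1}(e) ≠ h_k(e)`. -/
theorem at_most_one_sign_change {N : ℕ} (E : Fin N → ℝ) (hE : Monotone E)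
    (ΔE : ℝ) (hΔE : 0 < ΔE) (x : ℝ) (hx0 : 0 ≤ x) (hxΔ : x < ΔE)
    (j m : Fin N) (hjm : m < j) (hgap : E j - E m ≤ ΔE) :
    ∀ k1 k2 : ℕ, ∀ hk1 : k1 < (j : ℕ), ∀ hk2 : k2 < (j : ℕ),
      (m : ℕ) ≤ k1 → (m : ℕ) ≤ k2 →
      hj E ΔE ⟨k1 + 1, Nat.lt_of_le_of_lt hk1 j.isLt⟩ x ≠
        hj E ΔE ⟨k1, Nat.lt_trans hk1 j.isLt⟩ x →
      hj E ΔE ⟨k2 + 1, Nat.lt_of_le_of_lt hk2 j.isLt⟩ x ≠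
        hj E ΔE ⟨k2, Nat.lt_trans hk2 j.isLt⟩ x →
      k1 = k2 := by
  -- the floor function is monotone in the index
  have hf : ∀ a b : Fin N, a ≤ b → ⌊(E a - x)/ΔE⌋ ≤ ⌊(E b - x)/ΔE⌋ := by
    intro a b hab
    apply Int.floor_le_floor
    gcongr
    exact hE hab
  -- gap bound
  have hgap' : ⌊(E j - x)/ΔE⌋ ≤ ⌊(E m - x)/ΔE⌋ + 1 := by
    have h1 : (E j - x)/ΔE ≤ (E m - x)/ΔE + 1 := by
      rw [div_add' _ _ _ (ne_of_gt hΔE)]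
      gcongr
      linarith
    calc ⌊(E j - x)/ΔE⌋ ≤ ⌊(E m - x)/ΔE + (1:ℤ)⌋ := Int.floor_le_floor (by exact_mod_cast h1)
      _ = ⌊(E m - x)/ΔE⌋ + 1 := Int.floor_add_intCast _ _
  -- a sign change forces the floor to strictly increase
  have hchange : ∀ (a b : Fin N), a ≤ b →
      hj E ΔE b x ≠ hj E ΔE a x → ⌊(E a - x)/ΔE⌋ + 1 ≤ ⌊(E b - x)/ΔE⌋ := by
    intro a b hab hne
    have hle := hf a b hab
    rcases lt_or_eq_of_le hle with h | h
    · omega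
    · exfalso; apply hne; unfold hj; rw [h]
  intro k1 k2 hk1 hk2 hm1 hm2 h1 h2
  by_contra hne
  -- WLOG
  have key : ∀ a b : ℕ, ∀ ha : a < (j : ℕ), ∀ hb : b < (j : ℕ),
      (m : ℕ) ≤ a → a < b →
      hj E ΔE ⟨a + 1, Nat.lt_of_le_of_lt ha j.isLt⟩ x ≠
        hj E ΔE ⟨a, Nat.lt_trans ha j.isLt⟩ x →
      hj E ΔE ⟨b + 1, Nat.lt_of_le_of_lt hb j.isLt⟩ x ≠
        hj E ΔE ⟨b, Nat.lt_trans hb j.isLt⟩ x → False := by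
    intro a b ha hb hma hab hca hcb
    have e1 := hchange ⟨a, Nat.lt_trans ha j.isLt⟩ ⟨a+1, Nat.lt_of_le_of_lt ha j.isLt⟩
      (by simp [Fin.le_def]) hca
    have e2 := hchange ⟨b, Nat.lt_trans hb j.isLt⟩ ⟨b+1, Nat.lt_of_le_of_lt hb j.isLt⟩
      (by simp [Fin.le_def]) hcb
    have e3 := hf ⟨a+1, Nat.lt_of_le_of_lt ha j.isLt⟩ ⟨b, Nat.lt_trans hb j.isLt⟩
      (by simpa [Fin.le_def] using hab)
    have e4 := hf m ⟨a, Nat.lt_trans ha j.isLt⟩ (by simpa [Fin.le_def] using hma)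
    have e5 := hf ⟨b+1, Nat.lt_of_le_of_lt hb j.isLt⟩ j (by simpa [Fin.le_def] using hb)
    omega
  rcases Nat.lt_or_ge k1 k2 with h | h
  · exact key k1 k2 hk1 hk2 hm1 h h1 h2
  · rcases lt_or_eq_of_le h with h' | h'
    · exact key k2 k1 hk2 hk1 hm2 h' h2 h1
    · exact hne h'.symm
end

section
/- Lemma 2: for every e ∈ [0, ΔE], the Hermitian matrix v(e) has the same spectrum (set of eigenvalues) as V; consequently ‖v(e)‖ = ‖V‖ in operator norm. -/
open scoped ComplexOrder Classical

/-- The operator norm of a complex matrix. -/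
noncomputable def opNorm {n : Type*} [Fintype n] [DecidableEq n] (A : Matrix n n ℂ) : ℝ :=
  ‖Matrix.toEuclideanCLM (𝕜 := ℂ) A‖

/-- The matrix `v(e) = Σ_{j,m} v_{jm}(e) |E_j⟩⟨E_m|` where `v_{jm}(e) = ± V_{jm}` according
to the sign of `(j−m)(h_j(e)−h_m(e))`, with `V_{jm} = ⟨E_j|V|E_m⟩`. -/
noncomputable def vMat {N : ℕ} (e : Fin N → EuclideanSpace ℂ (Fin N)) (E : Fin N → ℝ)
    (V : Matrix (Fin N) (Fin N) ℂ) (ΔE x : ℝ) : Matrix (Fin N) (Fin N) ℂ :=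
  ∑ j : Fin N, ∑ m : Fin N,
    (if 0 ≤ ((j : ℝ) - (m : ℝ)) * (hj E ΔE j x - hj E ΔE m x)
      then (inner ℂ (e j) (Matrix.toEuclideanCLM (𝕜 := ℂ) V (e m)) : ℂ)
      else -(inner ℂ (e j) (Matrix.toEuclideanCLM (𝕜 := ℂ) V (e m)) : ℂ)) •
    Matrix.of fun a b => e j a * (starRingEnd ℂ) (e m b)

/-! In the eigenbasis `|E_j⟩` of `H`, `v(e)` arises from `V` by flipping the signs of some
entries. Put `f_j = ⌊(E_j - e)/ΔE⌋`. If `V_{jm} ≠ 0` then `|f_j - f_m| ≤ 1`, and since `E` is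
monotone, `j - m` has the sign of `f_j - f_m`. With `σ_j = (-1)^⌊f_j/2⌋` we have
`σ(k+1) σ(k) = (-1)^k = h(k+1) - h(k)`, so `v_{jm} = σ_j σ_m V_{jm}` for all `j, m`. Hence
`v(e) = U V U*` with `U = P diag(σ) P*` unitary, `P` being the matrix of eigenvectors, and unitary
conjugation preserves both spectrum and operator norm. -/

open Matrix

/-- The sign pattern `+ + - - + + - - ⋯`; `k / 2` rounds down on `ℤ`. -/
noncomputable def pairSign (k : ℤ) : ℝ := (-1) ^ (k / 2)

lemma pairSign_mul_self (k : ℤ) : pairSign k * pairSign k = 1 := by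
  rw [pairSign, ← mul_zpow]; norm_num

lemma pairSign_succ_mul (k : ℤ) : pairSign (k + 1) * pairSign k = (-1) ^ k := by
  rw [pairSign, pairSign, ← zpow_add₀ (by norm_num)]
  congr 1
  omega

noncomputable def parityHalf (k : ℤ) : ℝ := if Odd k then 1 / 2 else -(1 / 2)

lemma parityHalf_succ_sub (k : ℤ) : parityHalf (k + 1) - parityHalf k = (-1) ^ k := by
  rcases Int.even_or_odd k with hk | hk
  · simp [parityHalf, hk.add_one, Int.not_odd_iff_even.mpr hk, hk.neg_one_zpow]
    norm_num
  · simp [parityHalf, hk, Int.not_odd_iff_even.mpr hk.add_one, hk.neg_one_zpow]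
    norm_num

lemma ite_nonneg_mul_neg_one_zpow {d : ℝ} (hd : 0 < d) (k : ℤ) :
    (if 0 ≤ d * (-1) ^ k then 1 else -1 : ℝ) = (-1) ^ k := by
  rcases Int.even_or_odd k with hk | hk
  · simp [hk.neg_one_zpow, hd.le]
  · simp [hk.neg_one_zpow, hd]

theorem ite_nonneg_mul_parityHalf_sub {k l : ℤ} (hkl : |k - l| ≤ 1) {d : ℝ}
    (hlt : k < l → d < 0) (hgt : l < k → 0 < d) :
    (if 0 ≤ d * (parityHalf k - parityHalf l) then 1 else -1) = pairSign k * pairSign l := by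
  obtain rfl | rfl | rfl : k = l ∨ k = l + 1 ∨ l = k + 1 := by
    rcases abs_le.mp hkl with ⟨h₁, h₂⟩; omega
  · simp [pairSign_mul_self]
  · rw [parityHalf_succ_sub, pairSign_succ_mul]
    exact ite_nonneg_mul_neg_one_zpow (hgt (by omega)) l
  · rw [← neg_sub, mul_neg, ← neg_mul, parityHalf_succ_sub, mul_comm (pairSign k),
      pairSign_succ_mul]
    exact ite_nonneg_mul_neg_one_zpow (neg_pos.mpr (hlt (by omega))) k

theorem abs_floor_sub_floor_le_one {R : Type*} [Ring R] [LinearOrder R] [IsOrderedRing R]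
    [FloorRing R] {a b : R} (h : |a - b| ≤ 1) : |⌊a⌋ - ⌊b⌋| ≤ 1 := by
  have floor_le {a b : R} (h : a - b ≤ 1) : ⌊a⌋ ≤ ⌊b⌋ + 1 := by
    rw [← Int.floor_add_one]; exact Int.floor_mono (sub_le_iff_le_add'.mp h)
  have h₁ := floor_le ((le_abs_self _).trans h)
  have h₂ := floor_le ((le_abs_self _).trans ((abs_sub_comm b a).trans_le h))
  exact abs_le.mpr ⟨by omega, by omega⟩

def colMatrix {n : Type*} (e : n → EuclideanSpace ℂ n) : Matrix n n ℂ := of fun a j => e j a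

section ColMatrix

variable {n : Type*} [Fintype n] (e : n → EuclideanSpace ℂ n)

lemma colMatrix_mem_unitaryGroup [DecidableEq n] (he : Orthonormal ℂ e) :
    colMatrix e ∈ unitaryGroup n ℂ := by
  rw [mem_unitaryGroup_iff', star_eq_conjTranspose]
  have := gram_eq_conjTranspose_mul (EuclideanSpace.basisFun n ℂ) e
  simpa [gram_eq_one_iff_orthonormal.mpr he, colMatrix] using this.symm

lemma inner_toEuclideanCLM_eq [DecidableEq n] (A : Matrix n n ℂ) (j m : n) :
    inner ℂ (e j) (toEuclideanCLM (𝕜 := ℂ) A (e m)) = ((colMatrix e)ᴴ * A * colMatrix e) j m := by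
  simp only [EuclideanSpace.inner_eq_star_dotProduct, ofLp_toEuclideanCLM, colMatrix, mul_apply,
    dotProduct, mulVec, conjTranspose_apply, of_apply, Pi.star_apply, Finset.sum_mul]
  rw [Finset.sum_comm]
  refine Finset.sum_congr rfl fun a _ => Finset.sum_congr rfl fun b _ => ?_
  ring

lemma sum_smul_outer_eq (C : Matrix n n ℂ) :
    ∑ j, ∑ m, C j m • of (fun a b => e j a * starRingEnd ℂ (e m b)) =
      colMatrix e * C * (colMatrix e)ᴴ := by
  ext a b
  simp only [Matrix.sum_apply, Matrix.smul_apply, of_apply, smul_eq_mul, mul_apply,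
    conjTranspose_apply, colMatrix, ← starRingEnd_apply, Finset.sum_mul]
  rw [Finset.sum_comm]
  refine Finset.sum_congr rfl fun j _ => Finset.sum_congr rfl fun m _ => ?_
  ring

end ColMatrix

theorem exists_unitary_sum_sign_smul_outer_eq {n : Type*} [Fintype n] [DecidableEq n]
    {e : n → EuclideanSpace ℂ n} (he : Orthonormal ℂ e) {σ : n → ℝ} (hσ : ∀ j, σ j * σ j = 1)
    (A : Matrix n n ℂ) :
    ∃ U ∈ unitary (Matrix n n ℂ),
      ∑ j, ∑ m, ((σ j * σ m : ℝ) * inner ℂ (e j) (toEuclideanCLM (𝕜 := ℂ) A (e m))) •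
        of (fun a b => e j a * starRingEnd ℂ (e m b)) = U * A * star U := by
  set P := colMatrix e
  set D : Matrix n n ℂ := diagonal fun j => (σ j : ℂ)
  have hP : P ∈ unitary (Matrix n n ℂ) := colMatrix_mem_unitaryGroup e he
  have hD_star : star D = D := by
    simp [D, star_eq_conjTranspose, diagonal_conjTranspose]
  have hD : D ∈ unitary (Matrix n n ℂ) := by
    refine mem_unitaryGroup_iff'.mpr ?_
    rw [hD_star, diagonal_mul_diagonal, ← diagonal_one]
    congr 1
    ext j
    exact_mod_cast hσ j
  have hcoeff (j m : n) : ((σ j * σ m : ℝ) : ℂ) * inner ℂ (e j) (toEuclideanCLM (𝕜 := ℂ) A (e m)) =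
      (D * (Pᴴ * A * P) * D) j m := by
    rw [inner_toEuclideanCLM_eq, mul_diagonal, diagonal_mul]
    push_cast
    ring
  refine ⟨P * D * star P, mul_mem (mul_mem hP hD) (Unitary.star_mem hP), ?_⟩
  simp only [hcoeff, sum_smul_outer_eq, star_mul, hD_star, star_eq_conjTranspose,
    conjTranspose_conjTranspose, Matrix.mul_assoc]
  rfl

open scoped Matrix.Norms.L2Operator in
lemma opNorm_unitary_conj {n : Type*} [Fintype n] [DecidableEq n] {U : Matrix n n ℂ}
    (hU : U ∈ unitary (Matrix n n ℂ)) (A : Matrix n n ℂ) :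
    opNorm (U * A * star U) = opNorm A := by
  simp only [opNorm, ← cstar_norm_def]
  rw [CStarRing.norm_mul_mem_unitary _ (Unitary.star_mem hU), CStarRing.norm_mem_unitary_mul _ hU]

theorem vMat_eq_sum_pairSign_smul {N : ℕ} {e : Fin N → EuclideanSpace ℂ (Fin N)}
    {E : Fin N → ℝ} (hE : Monotone E) {V : Matrix (Fin N) (Fin N) ℂ} {ΔE : ℝ} (hΔE : 0 < ΔE)
    (hgap : ∀ j m, |E j - E m| > ΔE → inner ℂ (e j) (toEuclideanCLM (𝕜 := ℂ) V (e m)) = 0)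
    (x : ℝ) :
    vMat e E V ΔE x = ∑ j, ∑ m,
      ((pairSign ⌊(E j - x) / ΔE⌋ * pairSign ⌊(E m - x) / ΔE⌋ : ℝ) *
        inner ℂ (e j) (toEuclideanCLM (𝕜 := ℂ) V (e m))) •
        of (fun a b => e j a * starRingEnd ℂ (e m b)) := by
  have hfloor : Monotone fun j => ⌊(E j - x) / ΔE⌋ := fun a b hab =>
    Int.floor_mono (by gcongr; exact hE hab)
  refine Finset.sum_congr rfl fun j _ => Finset.sum_congr rfl fun m _ => ?_
  congr 1
  by_cases hW : inner ℂ (e j) (toEuclideanCLM (𝕜 := ℂ) V (e m)) = 0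
  · simp [hW]
  have hclose : |(E j - x) / ΔE - (E m - x) / ΔE| ≤ 1 := by
    rw [← sub_div, sub_sub_sub_cancel_right, abs_div, abs_of_pos hΔE, div_le_one hΔE]
    exact not_lt.mp (mt (hgap j m) hW)
  have hsign := ite_nonneg_mul_parityHalf_sub (abs_floor_sub_floor_le_one hclose)
    (d := (j : ℝ) - m) (fun h => sub_neg.mpr (by exact_mod_cast hfloor.reflect_lt h))
    (fun h => sub_pos.mpr (by exact_mod_cast hfloor.reflect_lt h))
  rw [← hsign]
  change (if 0 ≤ _ * (parityHalf _ - parityHalf _) then _ else _) = _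
  split_ifs <;> simp

theorem vOp_same_spectrum_and_norm_general {N : ℕ}
    (V : Matrix (Fin N) (Fin N) ℂ)
    (e : Fin N → EuclideanSpace ℂ (Fin N)) (horth : Orthonormal ℂ e)
    (E : Fin N → ℝ) (hE : Monotone E)
    (ΔE : ℝ) (hΔE : 0 < ΔE)
    (hgap : ∀ j m, |E j - E m| > ΔE →
      (inner ℂ (e j) (Matrix.toEuclideanCLM (𝕜 := ℂ) V (e m)) : ℂ) = 0)
    (x : ℝ) :
    spectrum ℂ (vMat e E V ΔE x) = spectrum ℂ V ∧
      opNorm (vMat e E V ΔE x) = opNorm V := by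
  obtain ⟨U, hU, hconj⟩ := exists_unitary_sum_sign_smul_outer_eq horth
    (σ := fun j => pairSign ⌊(E j - x) / ΔE⌋) (fun j => pairSign_mul_self _) V
  rw [vMat_eq_sum_pairSign_smul hE hΔE hgap x, hconj]
  exact ⟨Unitary.spectrum_star_right_conjugate (U := ⟨U, hU⟩), opNorm_unitary_conj hU V⟩

/-- Lemma 2: for every `e ∈ [0, ΔE]`, the matrix `v(e)` has the same spectrum as `V`;
consequently it has the same operator norm as `V`. -/
theorem vOp_same_spectrum_and_norm {N : ℕ} (hN : 1 ≤ N)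
    (H V : Matrix (Fin N) (Fin N) ℂ) (hH : H.IsHermitian) (hV : V.IsHermitian)
    (e : Fin N → EuclideanSpace ℂ (Fin N)) (horth : Orthonormal ℂ e)
    (hspan : Submodule.span ℂ (Set.range e) = ⊤)
    (E : Fin N → ℝ) (hE : Monotone E)
    (heig : ∀ j, Matrix.toEuclideanCLM (𝕜 := ℂ) H (e j) = (E j : ℂ) • e j)
    (ΔE : ℝ) (hΔE : 0 < ΔE)
    (hgap : ∀ j m, |E j - E m| > ΔE →
      (inner ℂ (e j) (Matrix.toEuclideanCLM (𝕜 := ℂ) V (e m)) : ℂ) = 0)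
    (x : ℝ) (hx0 : 0 ≤ x) (hxΔ : x ≤ ΔE) :
    spectrum ℂ (vMat e E V ΔE x) = spectrum ℂ V ∧
      opNorm (vMat e E V ΔE x) = opNorm V :=
  vOp_same_spectrum_and_norm_general V e horth E hE ΔE hΔE hgap x
end

section
/- If an operator W on the L-fold tensor product (ℂ^{N_s})^{⊗L} commutes with M^{(l)} for every site l outside a set i of sites and every N_s×N_s complex matrix M, then for any two product basis vectors |E_j⟩ = |E^s_{j_1}⟩⊗…⊗|E^s_{j_L}⟩ and |E_m⟩ = |E^s_{m_1}⟩⊗…⊗|E^s_{m_L}⟩ whose multi-indices satisfy j_l ≠ m_l for some site l ∉ i, the matrix element ⟨E_j| W |E_m⟩ vanishes. -/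
/-- The operator `M^{(l)} = I ⊗ ⋯ ⊗ I ⊗ M ⊗ I ⊗ ⋯ ⊗ I` (with `M` in the `l`-th tensor
factor), written as a matrix in the product basis of `(ℂ^{N_s})^{⊗L}`, whose index set is
`Fin L → Fin Ns`. -/
def site {L Ns : ℕ} (M : Matrix (Fin Ns) (Fin Ns) ℂ) (l : Fin L) :
    Matrix (Fin L → Fin Ns) (Fin L → Fin Ns) ℂ :=
  Matrix.of fun j m => if ∀ l', l' ≠ l → j l' = m l' then M (j l) (m l) else 0

/-- If an operator `W` on `(ℂ^{N_s})^{⊗L}` commutes with `M^{(l)}` for every site `l`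
outside a set `i` of sites and every `N_s × N_s` matrix `M`, then any matrix element
`⟨E_j|W|E_m⟩` between product basis vectors whose multi-indices differ at some site
`l ∉ i` vanishes. -/
theorem matrix_element_vanishes {L Ns : ℕ} (hL : 1 ≤ L) (hNs : 1 ≤ Ns)
    (W : Matrix (Fin L → Fin Ns) (Fin L → Fin Ns) ℂ) (i : Finset (Fin L))
    (hcomm : ∀ (M : Matrix (Fin Ns) (Fin Ns) ℂ) (l : Fin L), l ∉ i →
      site M l * W = W * site M l)
    (j m : Fin L → Fin Ns) (l : Fin L) (hl : l ∉ i) (hne : j l ≠ m l) :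
    W j m = 0 := by
  set M : Matrix (Fin Ns) (Fin Ns) ℂ := Matrix.single (j l) (j l) 1 with hM
  have h := congrFun (congrFun (hcomm M l hl) j) m
  have hleft : (site M l * W) j m = W j m := by
    rw [Matrix.mul_apply]
    rw [Finset.sum_eq_single j]
    · simp [site, hM, Matrix.single]
    · intro k _ hk
      rcases Function.ne_iff.mp hk with ⟨l', hl'⟩
      simp only [site, Matrix.of_apply, hM, Matrix.single, Matrix.of_apply]
      by_cases hc : ∀ l'', l'' ≠ l → j l'' = k l''
      · have : l' = l := by by_contra h'; exact hl' (hc l' h').symm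
        subst this
        simp [Ne.symm hl', hl']
      · simp [hc]
    · simp
  have hright : (W * site M l) j m = 0 := by
    rw [Matrix.mul_apply]
    apply Finset.sum_eq_zero
    intro k _
    simp only [site, Matrix.of_apply, hM, Matrix.single, Matrix.of_apply]
    by_cases hc : ∀ l'', l'' ≠ l → k l'' = m l''
    · simp only [hc, if_pos (fun l'' h => hc l'' h)]
      rw [if_neg (fun h => hne h.2), mul_zero]
    · simp [hc]
  rw [hleft, hright] at h
  exact h
end

section
/- If V is a sum of terms each supported on at most k sites (i.e., V = Σ_i V_i where each V_i commutes with M^{(l)} for every site l outside a set i of at most k sites and every N_s×N_s matrix M), then ⟨E_j| V |E_m⟩ = 0 for all pairs of product eigenvectors of H = Σ_{l=1}^L H^{(l)} whose total energies satisfy |E_j − E_m| > k·(E_smax − E_smin); in other words, the maximal energy jump ΔE of V with respect to H is at most k·(E_smax − E_smin). -/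
lemma offsite_zero {L Ns : ℕ} (A : Matrix (Fin L → Fin Ns) (Fin L → Fin Ns) ℂ)
    (l : Fin L)
    (h : ∀ M : Matrix (Fin Ns) (Fin Ns) ℂ, site M l * A = A * site M l)
    (j m : Fin L → Fin Ns) (hne : j l ≠ m l) : A j m = 0 := by
  have key := congrFun (congrFun (h (Matrix.single (j l) (j l) 1)) j) m
  rw [Matrix.mul_apply, Matrix.mul_apply] at key
  have hLft : ∑ x, site (Matrix.single (j l) (j l) 1) l j x * A x m = A j m := by
    rw [Finset.sum_eq_single j]
    · simp [site, Matrix.single]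
    · intro x _ hx
      by_cases hxl : x l = j l
      · have hex : ¬ ∀ l', l' ≠ l → j l' = x l' := by
          intro hc
          apply hx
          funext l'
          by_cases hl' : l' = l
          · subst hl'; exact hxl
          · exact (hc l' hl').symm
        simp only [site, Matrix.of_apply]
        rw [if_neg hex]; ring
      · simp only [site, Matrix.of_apply]
        by_cases hc : ∀ l', l' ≠ l → j l' = x l'
        · rw [if_pos hc]
          simp [Matrix.single, Ne.symm hxl]
        · rw [if_neg hc]; ring
    · simp
  have hRgt : ∑ x, A j x * site (Matrix.single (j l) (j l) 1) l x m = 0 := by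
    apply Finset.sum_eq_zero
    intro x _
    simp only [site, Matrix.of_apply]
    by_cases hc : ∀ l', l' ≠ l → x l' = m l'
    · rw [if_pos hc]
      simp [Matrix.single, hne]
    · rw [if_neg hc]; ring
  rw [hLft, hRgt] at key
  exact key

/-- If `V = Σ_t V_t` is a sum of terms each supported on at most `k` sites, then
`⟨E_j|V|E_m⟩ = 0` whenever the total energies `E_j = Σ_l E^s_{j_l}` and
`E_m = Σ_l E^s_{m_l}` satisfy `|E_j − E_m| > k·(E_smax − E_smin)`; i.e. the maximal
energy jump `ΔE` of `V` with respect to `H = Σ_l H^{(l)}` is at most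
`k·(E_smax − E_smin)`. -/
theorem energy_jump_bound {L Ns k : ℕ} (hL : 1 ≤ L) (hNs : 1 ≤ Ns)
    (hk1 : 1 ≤ k) (hkL : k ≤ L)
    (Es : Fin Ns → ℝ) (hEs : Monotone Es)
    (V : Matrix (Fin L → Fin Ns) (Fin L → Fin Ns) ℂ)
    (n : ℕ) (Vt : Fin n → Matrix (Fin L → Fin Ns) (Fin L → Fin Ns) ℂ)
    (supp : Fin n → Finset (Fin L))
    (hcard : ∀ t, (supp t).card ≤ k)
    (hcomm : ∀ t (M : Matrix (Fin Ns) (Fin Ns) ℂ) (l : Fin L), l ∉ supp t →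
      site M l * Vt t = Vt t * site M l)
    (hsum : V = ∑ t, Vt t)
    (j m : Fin L → Fin Ns)
    (hjump : |(∑ l, Es (j l)) - ∑ l, Es (m l)| >
      (k : ℝ) * (Es ⟨Ns - 1, Nat.sub_lt hNs Nat.one_pos⟩ - Es ⟨0, hNs⟩)) :
    V j m = 0 := by
  set Emax := Es ⟨Ns - 1, Nat.sub_lt hNs Nat.one_pos⟩
  set Emin := Es ⟨0, hNs⟩
  have hd0 : 0 ≤ Emax - Emin := by
    have : Emin ≤ Emax := hEs (by exact Fin.mk_le_mk.mpr (Nat.zero_le _))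
    linarith
  subst hsum
  rw [Matrix.sum_apply]
  apply Finset.sum_eq_zero
  intro t _
  by_cases hagree : ∀ l ∉ supp t, j l = m l
  · exfalso
    have hterm : ∀ l : Fin L, |Es (j l) - Es (m l)| ≤ Emax - Emin := by
      intro l
      have h1 : ∀ a : Fin Ns, Emin ≤ Es a ∧ Es a ≤ Emax := by
        intro a
        constructor
        · exact hEs (Fin.mk_le_mk.mpr (Nat.zero_le _))
        · exact hEs (Fin.mk_le_mk.mpr (Nat.le_sub_one_of_lt a.isLt))
      obtain ⟨h1l, h1r⟩ := h1 (j l)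
      obtain ⟨h2l, h2r⟩ := h1 (m l)
      rw [abs_le]
      constructor <;> linarith
    have hdiff : (∑ l, Es (j l)) - ∑ l, Es (m l)
        = ∑ l ∈ supp t, (Es (j l) - Es (m l)) := by
      rw [← Finset.sum_sub_distrib]
      rw [← Finset.sum_subset (Finset.subset_univ (supp t))]
      intro x _ hx
      rw [hagree x hx]; ring
    have hb : |(∑ l, Es (j l)) - ∑ l, Es (m l)| ≤ (k : ℝ) * (Emax - Emin) := by
      rw [hdiff]
      calc |∑ l ∈ supp t, (Es (j l) - Es (m l))|
          ≤ ∑ l ∈ supp t, |Es (j l) - Es (m l)| := Finset.abs_sum_le_sum_abs _ _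
        _ ≤ ∑ _l ∈ supp t, (Emax - Emin) := Finset.sum_le_sum fun l _ => hterm l
        _ = (supp t).card * (Emax - Emin) := by rw [Finset.sum_const]; simp
        _ ≤ (k : ℝ) * (Emax - Emin) := by
            apply mul_le_mul_of_nonneg_right _ hd0
            exact_mod_cast hcard t
    linarith [hjump]
  · push_neg at hagree
    obtain ⟨l, hl, hne⟩ := hagree
    exact offsite_zero (Vt t) l (fun M => hcomm t M l hl) j m hne
end
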